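/- Let (X,d) be the metric space X = [0,∞) with d as above (d(x,y) = 1/2^k if x ≠ y, ⌊x⌋ = ⌊y⌋ even and x,y ∈ [L_{2k}, L_{2k+1}); d = 1 for distinct points otherwise), with L_m = b_1+...+b_m, b_1 = 1, b_i = 2^{L_{i-1}}, and let f(x) = x + 1. Then for all distinct x, y ∈ (0,1), liminf_{n→∞} (1/n)#{0 ≤ i < n : d(f^i x, f^i y) < 1/2} = 0. -/

import Mathlib

open Filter Set
open scoped Classical

/-- `Lseq m = b₁ + ⋯ + b_m` where `b₁ = 1`, `b_i = 2^(b₁+⋯+b_{i-1})`;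
equivalently `Lseq 0 = 0`, `Lseq (m+1) = Lseq m + 2 ^ Lseq m`. -/
def Lseq : ℕ → ℕ
  | 0 => 0
  | m + 1 => Lseq m + 2 ^ Lseq m

/-- `bseq i = 2 ^ (L_{i-1})`, so `bseq 1 = 1`. -/
def bseq (i : ℕ) : ℕ := 2 ^ Lseq (i - 1)

/-- The three-valued distance of Example 1. -/
noncomputable def D (x y : ℝ) : ℝ :=
  if x = y then 0
  else if h : ∃ k : ℕ, ⌊x⌋ = ⌊y⌋ ∧ Even ⌊x⌋ ∧
      x ∈ Set.Ico ((Lseq (2 * k) : ℝ)) ((Lseq (2 * k + 1) : ℝ)) ∧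
      y ∈ Set.Ico ((Lseq (2 * k) : ℝ)) ((Lseq (2 * k + 1) : ℝ))
  then (1 / 2 : ℝ) ^ h.choose else 1

/-!
For `i ∈ [L_{2m+1}, L_{2m+2})` the points `x + i` and `y + i` lie in an odd block, where the
distance is `1`. So among the first `L_{2m+2} = L_{2m+1} + 2 ^ L_{2m+1}` times at most `L_{2m+1}`
have distance `< 1/2`, a proportion of at most `L_{2m+1} / 2 ^ L_{2m+1} → 0`.
-/

lemma liminf_eq_zero_of_tendsto_comp {u : ℕ → ℝ} {φ : ℕ → ℕ} (h0 : ∀ n, 0 ≤ u n)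
    (h1 : BddAbove (Set.range u)) (hφ : Tendsto φ atTop atTop)
    (hu : Tendsto (u ∘ φ) atTop (nhds 0)) :
    liminf u atTop = 0 := by
  have hbdd : IsBoundedUnder (· ≥ ·) atTop u := isBoundedUnder_of ⟨0, h0⟩
  have hcobdd {l : Filter ℕ} [l.NeBot] : IsCoboundedUnder (· ≥ ·) l u :=
    h1.isBoundedUnder_of_range.isCoboundedUnder_ge
  refine le_antisymm ?_ (le_liminf_of_le hcobdd (Eventually.of_forall h0))
  exact (hφ.liminf_le_liminf_comp hcobdd hbdd).trans hu.liminf_eq.le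

-- `stmt_15` elaborates `(Finset.range n).filter (fun i => D (x + i) (y + i) < 1 / 2)` with
-- `i : ℝ`, lifting `Finset.range n` to a `Finset ℝ`.
lemma card_filter_natCast_range {R : Type} [AddMonoidWithOne R] [CharZero R] (P : R → Prop)
    (n : ℕ) :
    ((Finset.range n).filter P).card = ((Finset.range n).filter (fun i : ℕ => P i)).card := by
  simp only [bind_pure_comp, Finset.fmap_def, Finset.filter_image]
  exact Finset.card_image_of_injective _ Nat.cast_injective

lemma card_filter_range_div_le_one (p : ℕ → Prop) [DecidablePred p] (n : ℕ) :
    (((Finset.range n).filter p).card : ℝ) / n ≤ 1 := by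
  refine div_le_one_of_le₀ ?_ n.cast_nonneg
  exact_mod_cast (Finset.card_filter_le _ _).trans (Finset.card_range n).le

lemma Lseq_strictMono : StrictMono Lseq :=
  strictMono_nat_of_lt_succ fun m => Nat.lt_add_of_pos_right (Nat.two_pow_pos (Lseq m))

lemma two_pow_Lseq_le_Lseq_succ (m : ℕ) : 2 ^ Lseq m ≤ Lseq (m + 1) :=
  Nat.le_add_left _ _

lemma tendsto_Lseq_odd_mul_half_pow :
    Tendsto (fun m : ℕ => (Lseq (2 * m + 1) : ℝ) * (1 / 2) ^ Lseq (2 * m + 1)) atTop (nhds 0) :=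
  (tendsto_self_mul_const_pow_of_lt_one (by norm_num) (by norm_num)).comp
    (Lseq_strictMono.comp fun a b h => by omega).tendsto_atTop

lemma exists_mem_even_block_of_D_lt_one {a b : ℝ} (hab : a ≠ b) (h : D a b < 1) :
    ∃ k : ℕ, a ∈ Ico (Lseq (2 * k) : ℝ) (Lseq (2 * k + 1)) := by
  by_contra hblock
  rw [D, if_neg hab, dif_neg fun hk => hblock (hk.imp fun _ hk => hk.2.2.1)] at h
  exact lt_irrefl 1 h

lemma natCast_mem_Ico_of_add_mem_Ico {x : ℝ} (hx0 : 0 ≤ x) (hx1 : x < 1) {i m n : ℕ}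
    (h : x + i ∈ Ico (m : ℝ) n) : i ∈ Ico m n := by
  obtain ⟨hm, hn⟩ := h
  have hm' : (m : ℝ) < (i + 1 : ℕ) := by push_cast; linarith
  have hn' : (i : ℝ) < n := by linarith
  exact ⟨Nat.lt_succ_iff.mp (by exact_mod_cast hm'), by exact_mod_cast hn'⟩

lemma lt_Lseq_odd_of_mem_even_block {i k m : ℕ} (hi : i ∈ Ico (Lseq (2 * k)) (Lseq (2 * k + 1)))
    (him : i < Lseq (2 * m + 2)) : i < Lseq (2 * m + 1) := by
  have hkm : k ≤ m := by
    by_contra! hmk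
    have := Lseq_strictMono.monotone (show 2 * m + 2 ≤ 2 * k by omega)
    exact absurd hi.1 (by omega)
  exact hi.2.trans_le (Lseq_strictMono.monotone (by omega))

lemma card_filter_D_lt_le {x y : ℝ} (hx0 : 0 ≤ x) (hx1 : x < 1) (hxy : x ≠ y) (m : ℕ) :
    ((Finset.range (Lseq (2 * m + 2))).filter
      (fun i : ℕ => D (x + i) (y + i) < 1 / 2)).card ≤ Lseq (2 * m + 1) := by
  refine (Finset.card_le_card fun i hi => ?_).trans (Finset.card_range _).le
  rw [Finset.mem_filter, Finset.mem_range] at hi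
  rw [Finset.mem_range]
  have hne : x + (i : ℝ) ≠ y + i := fun h => hxy (add_right_cancel h)
  obtain ⟨k, hk⟩ := exists_mem_even_block_of_D_lt_one hne (hi.2.trans (by norm_num))
  exact lt_Lseq_odd_of_mem_even_block (natCast_mem_Ico_of_add_mem_Ico hx0 hx1 hk) hi.1

lemma card_filter_D_lt_div_Lseq_le {x y : ℝ} (hx0 : 0 ≤ x) (hx1 : x < 1) (hxy : x ≠ y) (m : ℕ) :
    (((Finset.range (Lseq (2 * m + 2))).filter
      (fun i : ℕ => D (x + i) (y + i) < 1 / 2)).card : ℝ) / Lseq (2 * m + 2) ≤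
      Lseq (2 * m + 1) * (1 / 2) ^ Lseq (2 * m + 1) := by
  rw [one_div_pow, ← div_eq_mul_one_div]
  exact div_le_div₀ (Nat.cast_nonneg _) (by exact_mod_cast card_filter_D_lt_le hx0 hx1 hxy m)
    (by positivity) (by exact_mod_cast two_pow_Lseq_le_Lseq_succ (2 * m + 1))

theorem stmt_15 :
    ∀ x ∈ Set.Ioo (0 : ℝ) 1, ∀ y ∈ Set.Ioo (0 : ℝ) 1, x ≠ y →
    Filter.liminf (fun n : ℕ =>
      (((Finset.range n).filter (fun i => D (x + i) (y + i) < 1 / 2)).card : ℝ) / n)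
      Filter.atTop = 0 := by
  intro x hx y _ hxy
  simp only [card_filter_natCast_range]
  have hu0 (n : ℕ) :
      0 ≤ (((Finset.range n).filter (fun i : ℕ => D (x + i) (y + i) < 1 / 2)).card : ℝ) / n := by
    positivity
  exact liminf_eq_zero_of_tendsto_comp hu0
    ⟨1, Set.forall_mem_range.mpr fun n => card_filter_range_div_le_one _ n⟩
    (Lseq_strictMono.comp fun a b h => by omega).tendsto_atTop
    (squeeze_zero (fun m => hu0 _) (card_filter_D_lt_div_Lseq_le hx.1.le hx.2 hxy)
      tendsto_Lseq_odd_mul_half_pow)
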